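/- For stochastic transformations T ∈ S_m(M, M') and T' ∈ S_m(M', M''), the SDE transformation maps satisfy E_{T'} ∘ E_T = E_{T'∘T}: for every SDE (μ, σ) on M, E_{T'}(E_T(μ, σ)) = E_{T'∘T}(μ, σ). -/

import Mathlib

open Matrix

variable {n m : ℕ}

/-- Partial derivative ∂ᵢ f(x). -/
noncomputable def pd {n : ℕ} (f : (Fin n → ℝ) → ℝ) (i : Fin n) (x : Fin n → ℝ) : ℝ :=
  fderiv ℝ f x (Pi.single i 1)

/-- The generator L = A^{ij}∂ᵢ∂ⱼ + b^i ∂ᵢ of the SDE (b, σ), A = (1/2)σσᵀ. -/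
noncomputable def generator {n m : ℕ} (b : (Fin n → ℝ) → Fin n → ℝ)
    (σ : (Fin n → ℝ) → Matrix (Fin n) (Fin m) ℝ)
    (f : (Fin n → ℝ) → ℝ) (x : Fin n → ℝ) : ℝ :=
  (∑ i, ∑ j, ((1:ℝ)/2 * ∑ α, σ x i α * σ x j α) * pd (fun y => pd f j y) i x)
  + ∑ i, b x i * pd f i x

/-- The Jacobian matrix D(Φ)^l_i = ∂ᵢΦ^l. -/
noncomputable def jacobian {n : ℕ} (Φ : (Fin n → ℝ) → Fin n → ℝ) (x : Fin n → ℝ) :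
    Matrix (Fin n) (Fin n) ℝ :=
  fun l i => pd (fun y => Φ y l) i x

/-- E_T(b) = ((1/η) L(Φ)) ∘ Φ⁻¹, where Ψ = Φ⁻¹. -/
noncomputable def ETdrift {n m : ℕ} (Φ Ψ : (Fin n → ℝ) → Fin n → ℝ)
    (η : (Fin n → ℝ) → ℝ) (b : (Fin n → ℝ) → Fin n → ℝ)
    (σ : (Fin n → ℝ) → Matrix (Fin n) (Fin m) ℝ) :
    (Fin n → ℝ) → Fin n → ℝ :=
  fun x i => (1 / η (Ψ x)) * generator b σ (fun y => Φ y i) (Ψ x)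

/-- E_T(σ) = ((1/√η) D(Φ)·σ·B⁻¹) ∘ Φ⁻¹, where Ψ = Φ⁻¹. -/
noncomputable def ETdiffusion {n m : ℕ} (Φ Ψ : (Fin n → ℝ) → Fin n → ℝ)
    (B : (Fin n → ℝ) → Matrix (Fin m) (Fin m) ℝ) (η : (Fin n → ℝ) → ℝ)
    (σ : (Fin n → ℝ) → Matrix (Fin n) (Fin m) ℝ) :
    (Fin n → ℝ) → Matrix (Fin n) (Fin m) ℝ :=
  fun x => (1 / Real.sqrt (η (Ψ x))) • (jacobian Φ (Ψ x) * σ (Ψ x) * (B (Ψ x))⁻¹)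

/-! ### Auxiliary lemmas -/


lemma diffAt_of_contDiffOn {f : (Fin n → ℝ) → ℝ} {U : Set (Fin n → ℝ)} (hU : IsOpen U)
    (hf : ContDiffOn ℝ (⊤ : ℕ∞) f U) {x : Fin n → ℝ} (hx : x ∈ U) : DifferentiableAt ℝ f x :=
  (hf.differentiableOn (by simp)).differentiableAt (hU.mem_nhds hx)

lemma diffAt_of_contDiffOn' {f : (Fin n → ℝ) → (Fin n → ℝ)} {U : Set (Fin n → ℝ)} (hU : IsOpen U)
    (hf : ContDiffOn ℝ (⊤ : ℕ∞) f U) {x : Fin n → ℝ} (hx : x ∈ U) : DifferentiableAt ℝ f x :=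
  (hf.differentiableOn (by simp)).differentiableAt (hU.mem_nhds hx)

lemma pd_congr_nhds {f g : (Fin n → ℝ) → ℝ} {x : Fin n → ℝ} (h : f =ᶠ[nhds x] g) (i : Fin n) :
    pd f i x = pd g i x := by
  unfold pd; rw [h.fderiv_eq]

lemma pd_contDiffOn {f : (Fin n → ℝ) → ℝ} {U : Set (Fin n → ℝ)} (hU : IsOpen U)
    (hf : ContDiffOn ℝ (⊤ : ℕ∞) f U) (i : Fin n) : ContDiffOn ℝ (⊤ : ℕ∞) (pd f i) U := by
  have h := hf.fderiv_of_isOpen (m := (⊤ : ℕ∞)) hU (by simp)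
  exact h.clm_apply contDiffOn_const

lemma clm_apply_eq_sum (ℓ : (Fin n → ℝ) →L[ℝ] ℝ) (v : Fin n → ℝ) :
    ℓ v = ∑ k, v k * ℓ (Pi.single k 1) := by
  have hv : v = ∑ k, Pi.single k (v k) := (Finset.univ_sum_single v).symm
  conv_lhs => rw [hv]
  rw [map_sum]
  refine Finset.sum_congr rfl fun k _ => ?_
  have : Pi.single k (v k) = v k • (Pi.single k 1 : Fin n → ℝ) := by
    funext j
    simp [Pi.single_apply]
  rw [this, _root_.map_smul, smul_eq_mul]

lemma pd_proj_comp {Φ : (Fin n → ℝ) → (Fin n → ℝ)} {x : Fin n → ℝ}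
    (hΦ : DifferentiableAt ℝ Φ x) (l i : Fin n) :
    pd (fun w => Φ w l) i x = fderiv ℝ Φ x (Pi.single i 1) l := by
  unfold pd
  have : (fun w => Φ w l) = (ContinuousLinearMap.proj (R := ℝ) (φ := fun _ : Fin n => ℝ) l) ∘ Φ := rfl
  rw [this, fderiv_comp x ((ContinuousLinearMap.proj l).differentiableAt) hΦ]
  simp

lemma pd_comp {f : (Fin n → ℝ) → ℝ} {Φ : (Fin n → ℝ) → (Fin n → ℝ)} {x : Fin n → ℝ}
    (hf : DifferentiableAt ℝ f (Φ x)) (hΦ : DifferentiableAt ℝ Φ x) (i : Fin n) :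
    pd (fun w => f (Φ w)) i x = ∑ k, pd f k (Φ x) * pd (fun w => Φ w k) i x := by
  have h1 : pd (fun w => f (Φ w)) i x = fderiv ℝ f (Φ x) (fderiv ℝ Φ x (Pi.single i 1)) := by
    unfold pd
    rw [show (fun w => f (Φ w)) = f ∘ Φ from rfl, fderiv_comp x hf hΦ]; rfl
  rw [h1, clm_apply_eq_sum]
  exact Finset.sum_congr rfl fun k _ => by rw [pd_proj_comp hΦ, mul_comm]; rfl

lemma pd_mul {f g : (Fin n → ℝ) → ℝ} {x : Fin n → ℝ} (hf : DifferentiableAt ℝ f x)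
    (hg : DifferentiableAt ℝ g x) (i : Fin n) :
    pd (fun w => f w * g w) i x = pd f i x * g x + f x * pd g i x := by
  unfold pd
  rw [fderiv_fun_mul hf hg]
  simp only [ContinuousLinearMap.add_apply, ContinuousLinearMap.smul_apply, smul_eq_mul]
  ring

lemma pd_sum {ι : Type*} (s : Finset ι) {F : ι → (Fin n → ℝ) → ℝ} {x : Fin n → ℝ}
    (h : ∀ l ∈ s, DifferentiableAt ℝ (F l) x) (i : Fin n) :
    pd (fun w => ∑ l ∈ s, F l w) i x = ∑ l ∈ s, pd (F l) i x := by
  unfold pd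
  rw [fderiv_fun_sum h]
  simp

lemma sum_comm4 {a b c d : ℕ} {M : Type*} [AddCommMonoid M]
    (F : Fin a → Fin b → Fin c → Fin d → M) :
    ∑ i, ∑ j, ∑ l, ∑ k, F i j l k = ∑ k, ∑ l, ∑ i, ∑ j, F i j l k := by
  have h : ∑ p : Fin a × Fin b, ∑ q : Fin c × Fin d, F p.1 p.2 q.1 q.2
      = ∑ q : Fin c × Fin d, ∑ p : Fin a × Fin b, F p.1 p.2 q.1 q.2 := Finset.sum_comm
  calc ∑ i, ∑ j, ∑ l, ∑ k, F i j l k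
      = ∑ l, ∑ k, ∑ i, ∑ j, F i j l k := by simpa [Fintype.sum_prod_type] using h
    _ = ∑ k, ∑ l, ∑ i, ∑ j, F i j l k := Finset.sum_comm

lemma sum_comm3 {a b c : ℕ} {M : Type*} [AddCommMonoid M]
    (F : Fin a → Fin b → Fin c → M) :
    ∑ i, ∑ j, ∑ k, F i j k = ∑ k, ∑ i, ∑ j, F i j k := by
  have h : ∑ p : Fin a × Fin b, ∑ k, F p.1 p.2 k
      = ∑ k, ∑ p : Fin a × Fin b, F p.1 p.2 k := Finset.sum_comm
  simpa [Fintype.sum_prod_type] using h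

lemma gen_algebra {n' : ℕ} (A : Fin n' → Fin n' → ℝ) (bb : Fin n' → ℝ) (J : Fin n' → Fin n' → ℝ)
    (G : Fin n' → ℝ) (S : Fin n' → Fin n' → Fin n' → ℝ) (D : Fin n' → Fin n' → ℝ) :
    ∑ i, ∑ j, A i j * (∑ l, ((∑ k, D k l * J k i) * J l j + G l * S i j l))
      + ∑ i, bb i * (∑ l, G l * J l i)
    = ∑ k, ∑ l, (∑ i, ∑ j, A i j * (J k i * J l j)) * D k l
      + ∑ k, ((∑ i, ∑ j, A i j * S i j k) + ∑ i, bb i * J k i) * G k := by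
  simp only [Finset.mul_sum, Finset.sum_mul, mul_add, add_mul, Finset.sum_add_distrib]
  have h1 : (∑ i, ∑ j, ∑ l, ∑ k, A i j * (D k l * J k i * J l j))
      = ∑ k, ∑ l, ∑ i, ∑ j, A i j * (J k i * J l j) * D k l := by
    rw [sum_comm4]
    exact Finset.sum_congr rfl fun _ _ => Finset.sum_congr rfl fun _ _ =>
      Finset.sum_congr rfl fun _ _ => Finset.sum_congr rfl fun _ _ => by ring
  have h2 : (∑ i, ∑ j, ∑ k, A i j * (G k * S i j k))
      = ∑ k, ∑ i, ∑ j, A i j * S i j k * G k := by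
    rw [sum_comm3]
    exact Finset.sum_congr rfl fun _ _ => Finset.sum_congr rfl fun _ _ =>
      Finset.sum_congr rfl fun _ _ => by ring
  have h3 : (∑ i, ∑ k, bb i * (G k * J k i)) = ∑ k, ∑ i, bb i * J k i * G k := by
    rw [Finset.sum_comm]
    exact Finset.sum_congr rfl fun _ _ => Finset.sum_congr rfl fun _ _ => by ring
  rw [h1, h2, h3]
  ring

lemma generator_comp {n m : ℕ} {U V : Set (Fin n → ℝ)} (hU : IsOpen U) (hV : IsOpen V)
    {Φ : (Fin n → ℝ) → (Fin n → ℝ)} {f : (Fin n → ℝ) → ℝ}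
    (hΦ : ContDiffOn ℝ (⊤ : ℕ∞) Φ U) (hf : ContDiffOn ℝ (⊤ : ℕ∞) f V) (hmap : Set.MapsTo Φ U V)
    (b : (Fin n → ℝ) → Fin n → ℝ) (σ : (Fin n → ℝ) → Matrix (Fin n) (Fin m) ℝ)
    {y : Fin n → ℝ} (hy : y ∈ U) :
    generator b σ (fun w => f (Φ w)) y =
      (∑ k, ∑ l, (∑ i, ∑ j, ((1:ℝ)/2 * ∑ α, σ y i α * σ y j α) *
          (pd (fun w => Φ w k) i y * pd (fun w => Φ w l) j y)) *
        pd (fun w => pd f l w) k (Φ y))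
      + ∑ k, generator b σ (fun w => Φ w k) y * pd f k (Φ y) := by
  have hΦd : ∀ w ∈ U, DifferentiableAt ℝ Φ w := fun w hw => diffAt_of_contDiffOn' hU hΦ hw
  have hΦl : ∀ l : Fin n, ContDiffOn ℝ (⊤ : ℕ∞) (fun w => Φ w l) U := fun l =>
    (ContinuousLinearMap.proj (R := ℝ) (φ := fun _ : Fin n => ℝ) l).contDiff.comp_contDiffOn hΦ
  have hgs : ∀ l : Fin n, ContDiffOn ℝ (⊤ : ℕ∞) (pd f l) V := fun l => pd_contDiffOn hV hf l
  have hfd : ∀ v ∈ V, DifferentiableAt ℝ f v := fun v hv => diffAt_of_contDiffOn hV hf hv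
  have H1 : ∀ w ∈ U, ∀ i : Fin n, pd (fun w' => f (Φ w')) i w
      = ∑ l, pd f l (Φ w) * pd (fun w' => Φ w' l) i w := fun w hw i =>
    pd_comp (hfd _ (hmap hw)) (hΦd w hw) i
  have H2 : ∀ i j : Fin n, pd (fun w => pd (fun w' => f (Φ w')) j w) i y
      = ∑ l, ((∑ k, pd (pd f l) k (Φ y) * pd (fun w => Φ w k) i y) * pd (fun w => Φ w l) j y
          + pd f l (Φ y) * pd (fun w => pd (fun w' => Φ w' l) j w) i y) := by
    intro i j
    have heq : (fun w => pd (fun w' => f (Φ w')) j w)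
        =ᶠ[nhds y] fun w => ∑ l, pd f l (Φ w) * pd (fun w' => Φ w' l) j w :=
      Filter.eventuallyEq_of_mem (hU.mem_nhds hy) (fun w hw => H1 w hw j)
    rw [pd_congr_nhds heq i]
    have hd1 : ∀ l : Fin n, DifferentiableAt ℝ (fun w => pd f l (Φ w)) y :=
      fun l => (diffAt_of_contDiffOn hV (hgs l) (hmap hy)).comp y (hΦd y hy)
    have hd2 : ∀ l : Fin n, DifferentiableAt ℝ (fun w => pd (fun w' => Φ w' l) j w) y :=
      fun l => diffAt_of_contDiffOn hU (pd_contDiffOn hU (hΦl l) j) hy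
    rw [pd_sum (F := fun l w => pd f l (Φ w) * pd (fun w' => Φ w' l) j w) Finset.univ (fun l _ => (hd1 l).mul (hd2 l)) i]
    refine Finset.sum_congr rfl fun l _ => ?_
    rw [pd_mul (hd1 l) (hd2 l) i,
      pd_comp (diffAt_of_contDiffOn hV (pd_contDiffOn hV hf l) (hmap hy)) (hΦd y hy) i]
  unfold generator
  simp only [H2, H1 y hy]
  exact gen_algebra _ _ _ _ _ _

lemma jacobian_comp {Φ Φ' : (Fin n → ℝ) → (Fin n → ℝ)} {y : Fin n → ℝ}
    (hΦ' : DifferentiableAt ℝ Φ' (Φ y)) (hΦ : DifferentiableAt ℝ Φ y) :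
    jacobian (fun w => Φ' (Φ w)) y = jacobian Φ' (Φ y) * jacobian Φ y := by
  funext l i
  show pd (fun w => Φ' (Φ w) l) i y = _
  have hd : DifferentiableAt ℝ (fun v => Φ' v l) (Φ y) :=
    ((ContinuousLinearMap.proj (R := ℝ) (φ := fun _ : Fin n => ℝ) l).differentiableAt).comp
      (Φ y) hΦ'
  rw [pd_comp (f := fun v => Φ' v l) hd hΦ i]
  rfl

lemma so_inv {m : ℕ} {B : Matrix (Fin m) (Fin m) ℝ}
    (hB : B ∈ Matrix.specialOrthogonalGroup (Fin m) ℝ) : B⁻¹ * (B⁻¹)ᵀ = 1 := by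
  have h1 : B * star B = 1 :=
    (Matrix.mem_orthogonalGroup_iff (Fin m) ℝ).mp (Matrix.mem_specialOrthogonalGroup_iff.mp hB).1
  have hst : star B = Bᵀ := by
    ext i j
    simp [Matrix.star_eq_conjTranspose, Matrix.conjTranspose_apply]
  rw [hst] at h1
  have h2 : Bᵀ * B = 1 := by rwa [mul_eq_one_comm] at h1
  rw [Matrix.inv_eq_right_inv h1, Matrix.transpose_transpose]
  exact h2

lemma coeff_eq {n m : ℕ} (J : Matrix (Fin n) (Fin n) ℝ) (σ0 : Matrix (Fin n) (Fin m) ℝ)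
    (Bi : Matrix (Fin m) (Fin m) ℝ) (hBi : Bi * Biᵀ = 1) (t : ℝ) (k l : Fin n) :
    (1:ℝ)/2 * ∑ α, (t • (J * σ0 * Bi)) k α * (t • (J * σ0 * Bi)) l α
    = (t*t) * ∑ i, ∑ j, ((1:ℝ)/2 * ∑ α, σ0 i α * σ0 j α) * (J k i * J l j) := by
  have hN : (J * σ0 * Bi) * (J * σ0 * Bi)ᵀ = J * (σ0 * σ0ᵀ) * Jᵀ := by
    calc (J * σ0 * Bi) * (J * σ0 * Bi)ᵀ
        = J * (σ0 * (Bi * (Biᵀ * (σ0ᵀ * Jᵀ)))) := by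
          simp only [Matrix.transpose_mul, Matrix.mul_assoc]
      _ = J * (σ0 * σ0ᵀ) * Jᵀ := by
          rw [← Matrix.mul_assoc Bi Biᵀ, hBi, Matrix.one_mul]
          simp only [Matrix.mul_assoc]
  have h1 : ∑ α, (J * σ0 * Bi) k α * (J * σ0 * Bi) l α = (J * (σ0 * σ0ᵀ) * Jᵀ) k l := by
    rw [← hN, Matrix.mul_apply]
    exact Finset.sum_congr rfl fun α _ => by rw [Matrix.transpose_apply]
  have h2 : (J * (σ0 * σ0ᵀ) * Jᵀ) k l
      = ∑ j, (∑ i, J k i * (∑ α, σ0 i α * σ0 j α)) * J l j := by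
    simp only [Matrix.mul_apply, Matrix.transpose_apply]
  have h3 : ∑ α, (t • (J * σ0 * Bi)) k α * (t • (J * σ0 * Bi)) l α
      = (t*t) * ∑ α, (J * σ0 * Bi) k α * (J * σ0 * Bi) l α := by
    rw [Finset.mul_sum]
    exact Finset.sum_congr rfl fun α _ => by
      simp only [Matrix.smul_apply, smul_eq_mul]; ring
  have h4 : ∑ i, ∑ j, ((1:ℝ)/2 * ∑ α, σ0 i α * σ0 j α) * (J k i * J l j)
      = (1:ℝ)/2 * ∑ j, (∑ i, J k i * (∑ α, σ0 i α * σ0 j α)) * J l j := by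
    rw [Finset.sum_comm, Finset.mul_sum]
    refine Finset.sum_congr rfl fun j _ => ?_
    rw [Finset.sum_mul, Finset.mul_sum]
    refine Finset.sum_congr rfl fun i _ => ?_
    ring
  rw [h3, h1, h2, h4]
  ring

lemma generator_expand {n m : ℕ} (b : (Fin n → ℝ) → Fin n → ℝ)
    (σ : (Fin n → ℝ) → Matrix (Fin n) (Fin m) ℝ)
    (g : (Fin n → ℝ) → ℝ) (x : Fin n → ℝ) :
    generator b σ g x =
      (∑ k, ∑ l, ((1:ℝ)/2 * ∑ α, σ x k α * σ x l α) * pd (fun w => pd g l w) k x)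
      + ∑ k, b x k * pd g k x := rfl

/-- for stochastic transformations T ∈ S_m(M, M') and
T' ∈ S_m(M', M''), the SDE transformations satisfy E_{T'} ∘ E_T = E_{T'∘T};
here T = (Φ, B, η) with inverse diffeomorphism Ψ = Φ⁻¹, the composition being
T'∘T = (Φ'∘Φ, (B'∘Φ)·B, (η'∘Φ)·η) with inverse Ψ ∘ Ψ'. -/
theorem SDE_transformation_functorial {n m : ℕ}
    (M M' M'' : Set (Fin n → ℝ))
    (hM : IsOpen M) (hM' : IsOpen M') (hM'' : IsOpen M'')
    -- T = (Φ, B, η) ∈ S_m(M, M')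
    (Φ Ψ : (Fin n → ℝ) → Fin n → ℝ)
    (B : (Fin n → ℝ) → Matrix (Fin m) (Fin m) ℝ) (η : (Fin n → ℝ) → ℝ)
    (hΦ : Set.BijOn Φ M M') (hΨ : Set.InvOn Ψ Φ M M')
    (hΦs : ContDiffOn ℝ (⊤ : ℕ∞) Φ M) (hΨs : ContDiffOn ℝ (⊤ : ℕ∞) Ψ M')
    (hB : ContDiffOn ℝ (⊤ : ℕ∞) (fun x i j => B x i j : (Fin n → ℝ) → Fin m → Fin m → ℝ) M)
    (hBSO : ∀ x ∈ M, B x ∈ Matrix.specialOrthogonalGroup (Fin m) ℝ)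
    (hη : ContDiffOn ℝ (⊤ : ℕ∞) η M) (hηpos : ∀ x ∈ M, 0 < η x)
    -- T' = (Φ', B', η') ∈ S_m(M', M'')
    (Φ' Ψ' : (Fin n → ℝ) → Fin n → ℝ)
    (B' : (Fin n → ℝ) → Matrix (Fin m) (Fin m) ℝ) (η' : (Fin n → ℝ) → ℝ)
    (hΦ' : Set.BijOn Φ' M' M'') (hΨ' : Set.InvOn Ψ' Φ' M' M'')
    (hΦ's : ContDiffOn ℝ (⊤ : ℕ∞) Φ' M') (hΨ's : ContDiffOn ℝ (⊤ : ℕ∞) Ψ' M'')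
    (hB' : ContDiffOn ℝ (⊤ : ℕ∞) (fun x i j => B' x i j : (Fin n → ℝ) → Fin m → Fin m → ℝ) M')
    (hB'SO : ∀ x ∈ M', B' x ∈ Matrix.specialOrthogonalGroup (Fin m) ℝ)
    (hη' : ContDiffOn ℝ (⊤ : ℕ∞) η' M') (hη'pos : ∀ x ∈ M', 0 < η' x)
    -- the SDE (b, σ) on M
    (b : (Fin n → ℝ) → Fin n → ℝ) (σ : (Fin n → ℝ) → Matrix (Fin n) (Fin m) ℝ)
    (hb : ContDiffOn ℝ (⊤ : ℕ∞) b M)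
    (hσ : ContDiffOn ℝ (⊤ : ℕ∞) (fun x i α => σ x i α : (Fin n → ℝ) → Fin n → Fin m → ℝ) M) :
    (∀ x ∈ M'',
      ETdrift Φ' Ψ' η' (ETdrift Φ Ψ η b σ) (ETdiffusion Φ Ψ B η σ) x =
      ETdrift (fun y => Φ' (Φ y)) (fun y => Ψ (Ψ' y))
        (fun y => η' (Φ y) * η y) b σ x) ∧
    (∀ x ∈ M'',
      ETdiffusion Φ' Ψ' B' η' (ETdiffusion Φ Ψ B η σ) x =
      ETdiffusion (fun y => Φ' (Φ y)) (fun y => Ψ (Ψ' y))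
        (fun y => B' (Φ y) * B y) (fun y => η' (Φ y) * η y) σ x) := by
  -- common membership facts
  have hzM' : ∀ x ∈ M'', Ψ' x ∈ M' := by
    intro x hx
    obtain ⟨w, hw, hwx⟩ := hΦ'.surjOn hx
    rw [← hwx, hΨ'.1 hw]
    exact hw
  have hyM : ∀ z ∈ M', Ψ z ∈ M := by
    intro z hz
    obtain ⟨w, hw, hwz⟩ := hΦ.surjOn hz
    rw [← hwz, hΨ.1 hw]
    exact hw
  constructor
  · -- drift part
    intro x hx
    have hz : Ψ' x ∈ M' := hzM' x hx
    have hy : Ψ (Ψ' x) ∈ M := hyM _ hz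
    have hΦy : Φ (Ψ (Ψ' x)) = Ψ' x := hΨ.2 hz
    funext i
    have hproj : ContDiffOn ℝ (⊤ : ℕ∞) (fun v => Φ' v i) M' :=
      (ContinuousLinearMap.proj (R := ℝ) (φ := fun _ : Fin n => ℝ) i).contDiff.comp_contDiffOn hΦ's
    have hgc : generator b σ (fun w => Φ' (Φ w) i) (Ψ (Ψ' x)) =
        (∑ k, ∑ l, (∑ i', ∑ j, ((1:ℝ)/2 * ∑ α, σ (Ψ (Ψ' x)) i' α * σ (Ψ (Ψ' x)) j α) *
            (pd (fun w => Φ w k) i' (Ψ (Ψ' x)) * pd (fun w => Φ w l) j (Ψ (Ψ' x)))) *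
          pd (fun w => pd (fun v => Φ' v i) l w) k (Ψ' x))
        + ∑ k, generator b σ (fun w => Φ w k) (Ψ (Ψ' x)) * pd (fun v => Φ' v i) k (Ψ' x) := by
      have h := generator_comp hM hM' hΦs hproj hΦ.mapsTo b σ hy
      rwa [hΦy] at h
    show (1 / η' (Ψ' x)) *
        generator (ETdrift Φ Ψ η b σ) (ETdiffusion Φ Ψ B η σ) (fun v => Φ' v i) (Ψ' x)
      = (1 / (η' (Φ (Ψ (Ψ' x))) * η (Ψ (Ψ' x)))) *
        generator b σ (fun w => Φ' (Φ w) i) (Ψ (Ψ' x))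
    rw [hΦy, hgc, generator_expand]
    have hcoef : ∀ k l : Fin n,
        (1:ℝ)/2 * ∑ α, ETdiffusion Φ Ψ B η σ (Ψ' x) k α * ETdiffusion Φ Ψ B η σ (Ψ' x) l α
        = (1 / η (Ψ (Ψ' x))) * ∑ i', ∑ j, ((1:ℝ)/2 * ∑ α, σ (Ψ (Ψ' x)) i' α * σ (Ψ (Ψ' x)) j α) *
            (pd (fun w => Φ w k) i' (Ψ (Ψ' x)) * pd (fun w => Φ w l) j (Ψ (Ψ' x))) := by
      intro k l
      have hBi : (B (Ψ (Ψ' x)))⁻¹ * ((B (Ψ (Ψ' x)))⁻¹)ᵀ = 1 := so_inv (hBSO _ hy)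
      have hce := coeff_eq (jacobian Φ (Ψ (Ψ' x))) (σ (Ψ (Ψ' x))) _ hBi
        (1 / Real.sqrt (η (Ψ (Ψ' x)))) k l
      have ht : (1 / Real.sqrt (η (Ψ (Ψ' x)))) * (1 / Real.sqrt (η (Ψ (Ψ' x))))
          = 1 / η (Ψ (Ψ' x)) := by
        rw [div_mul_div_comm, one_mul, Real.mul_self_sqrt (le_of_lt (hηpos _ hy))]
      rw [ht] at hce
      exact hce
    have hbb : ∀ k : Fin n, ETdrift Φ Ψ η b σ (Ψ' x) k
        = (1 / η (Ψ (Ψ' x))) * generator b σ (fun w => Φ w k) (Ψ (Ψ' x)) := fun k => rfl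
    rw [show (∑ k, ∑ l, ((1:ℝ)/2 * ∑ α, ETdiffusion Φ Ψ B η σ (Ψ' x) k α *
          ETdiffusion Φ Ψ B η σ (Ψ' x) l α) * pd (fun w => pd (fun v => Φ' v i) l w) k (Ψ' x))
        = ∑ k, ∑ l, ((1 / η (Ψ (Ψ' x))) * ∑ i', ∑ j,
            ((1:ℝ)/2 * ∑ α, σ (Ψ (Ψ' x)) i' α * σ (Ψ (Ψ' x)) j α) *
            (pd (fun w => Φ w k) i' (Ψ (Ψ' x)) * pd (fun w => Φ w l) j (Ψ (Ψ' x)))) *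
          pd (fun w => pd (fun v => Φ' v i) l w) k (Ψ' x)
      from Finset.sum_congr rfl fun k _ => Finset.sum_congr rfl fun l _ => by rw [hcoef k l]]
    rw [show (∑ k, ETdrift Φ Ψ η b σ (Ψ' x) k * pd (fun v => Φ' v i) k (Ψ' x))
        = ∑ k, ((1 / η (Ψ (Ψ' x))) * generator b σ (fun w => Φ w k) (Ψ (Ψ' x))) *
            pd (fun v => Φ' v i) k (Ψ' x)
      from Finset.sum_congr rfl fun k _ => by rw [hbb k]]
    have hfac : (1:ℝ) / (η' (Ψ' x) * η (Ψ (Ψ' x)))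
        = (1 / η' (Ψ' x)) * (1 / η (Ψ (Ψ' x))) := by
      rw [div_mul_div_comm, one_mul]
    rw [hfac]
    simp only [mul_assoc, ← Finset.mul_sum]
    ring
  · -- diffusion part
    intro x hx
    have hz : Ψ' x ∈ M' := hzM' x hx
    have hy : Ψ (Ψ' x) ∈ M := hyM _ hz
    have hΦy : Φ (Ψ (Ψ' x)) = Ψ' x := hΨ.2 hz
    show (1 / Real.sqrt (η' (Ψ' x))) •
        (jacobian Φ' (Ψ' x) * ETdiffusion Φ Ψ B η σ (Ψ' x) * (B' (Ψ' x))⁻¹)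
      = (1 / Real.sqrt (η' (Φ (Ψ (Ψ' x))) * η (Ψ (Ψ' x)))) •
        (jacobian (fun w => Φ' (Φ w)) (Ψ (Ψ' x)) * σ (Ψ (Ψ' x)) *
          (B' (Φ (Ψ (Ψ' x))) * B (Ψ (Ψ' x)))⁻¹)
    rw [hΦy]
    have hjc : jacobian (fun w => Φ' (Φ w)) (Ψ (Ψ' x))
        = jacobian Φ' (Ψ' x) * jacobian Φ (Ψ (Ψ' x)) := by
      have h := jacobian_comp (Φ := Φ) (Φ' := Φ')
        (by rw [hΦy]; exact diffAt_of_contDiffOn' hM' hΦ's hz)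
        (diffAt_of_contDiffOn' hM hΦs hy)
      rwa [hΦy] at h
    rw [hjc, Matrix.mul_inv_rev]
    have hσt : ETdiffusion Φ Ψ B η σ (Ψ' x) = (1 / Real.sqrt (η (Ψ (Ψ' x)))) •
        (jacobian Φ (Ψ (Ψ' x)) * σ (Ψ (Ψ' x)) * (B (Ψ (Ψ' x)))⁻¹) := rfl
    rw [hσt, Matrix.mul_smul, Matrix.smul_mul, smul_smul]
    congr 1
    · rw [Real.sqrt_mul (le_of_lt (hη'pos _ hz))]
      rw [div_mul_div_comm, one_mul]
    · simp only [Matrix.mul_assoc]
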